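/- Let G be a Coxeter group on Σ, x a new generator with x²=1 and (ax) of infinite order for all a∈Σ, forming G'=G*(ℤ/2ℤ). For w∈G write σ_w(x) = Σ_{b∈Σ∪{x}} λ_b b in the geometric representation of G'. Then for every b∈Σ: λ_b ≠ 0 if and only if b occurs in some (equivalently, every) geodesic word for w. Moreover λ_b ≥ 0 always, and λ_b > 0 when b occurs. -/

import Mathlib

/-- The defining relators of the Coxeter group with Coxeter matrix `M`. -/
def coxRels {S : Type*} (M : S → S → ℕ) : Set (FreeGroup S) :=
  {r | ∃ i j : S, r = (FreeGroup.of i * FreeGroup.of j) ^ (M i j)}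

/-- Evaluation of a word over the generating set in the Coxeter group of `M`. -/
def coxEval {S : Type*} (M : S → S → ℕ) (w : List S) : PresentedGroup (coxRels M) :=
  (w.map (fun a => PresentedGroup.of (rels := coxRels M) a)).prod

/-- The bilinear-form coefficients of the standard geometric representation. -/
noncomputable def coxB {S : Type*} (M : S → S → ℕ) (i j : S) : ℝ :=
  if M i j = 0 then -1 else -Real.cos (Real.pi / (M i j : ℝ))

/-- The standard geometric representation on a generator. -/
noncomputable def coxSigmaGen {S : Type*} [Fintype S] [DecidableEq S]
    (M : S → S → ℕ) (i : S) (v : S → ℝ) : S → ℝ :=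
  fun b => v b - (if b = i then 2 * ∑ j : S, v j * coxB M j i else 0)

/-- The geometric representation of a word `w = a₁ ⋯ aₙ`: `σ_w = σ_{a₁} ∘ ⋯ ∘ σ_{aₙ}`. -/
noncomputable def coxSigma {S : Type*} [Fintype S] [DecidableEq S]
    (M : S → S → ℕ) (w : List S) : (S → ℝ) → (S → ℝ) :=
  w.foldr (fun i f => (coxSigmaGen M i) ∘ f) id

/-- The unit basis vector of a letter `a`. -/
def unitVec {S : Type*} [DecidableEq S] (a : S) : S → ℝ :=
  fun b => if b = a then 1 else 0

/-- The Coxeter matrix of `G' = G * (ℤ/2ℤ)`: a new generator `x` (here `none`) is added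
with `x² = 1` and `m(a, x) = 0` (i.e. `ax` of infinite order) for all old generators. -/
def extMatrix {S : Type*} (M : S → S → ℕ) : Option S → Option S → ℕ :=
  fun x y => match x, y with
    | some i, some j => M i j
    | none, none => 1
    | _, _ => 0

/-!
Since `σ` is a representation of `G'`, `σ_w(x)` depends only on `w`, so we may read it off a
reduced word `a u` for `w`. The reflection `σ_a` changes only the `a`-coordinate of `σ_u(x)`, and
adds `-2 B(σ_u x, α_a) = -2 B(x, σ_{u⁻¹} α_a) = 2 Σ_b ν_b` with `ν = σ_{u⁻¹} α_a`. As `u⁻¹ a` is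
longer than `u⁻¹`, `ν` is a nonzero nonnegative combination of simple roots of `G`
(Humphreys, *Reflection groups and Coxeter groups*, Theorem 5.4), so the increment is positive.
By induction on the reduced word, the coordinates of the letters of the word are positive and all
others vanish.

Theorem 5.4 itself reduces to dihedral subgroups, where `σ_{s t s ⋯}(α_s)` has Chebyshev
coefficients `U_n(cos (π / m)) = sin ((n + 1) π / m) / sin (π / m)`; the same computation shows that
`σ` respects the Coxeter relations.
-/

open CoxeterSystem Polynomial.Chebyshev Real

theorem Real.sin_pi_div_pos {m : ℕ} (hm : 2 ≤ m) : 0 < sin (π / m) := by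
  have hm' : (2 : ℝ) ≤ m := by exact_mod_cast hm
  apply sin_pos_of_pos_of_lt_pi (by positivity)
  rw [div_lt_iff₀ (by linarith)]
  nlinarith [pi_pos]

namespace Polynomial.Chebyshev

theorem U_eval_add_one (c : ℝ) (n : ℤ) :
    (U ℝ (n + 1)).eval c = 2 * c * (U ℝ n).eval c - (U ℝ (n - 1)).eval c := by
  simp [U_add_one]

theorem U_eval_cos_pi_div_nonneg {m : ℕ} (hm : 2 ≤ m) {n : ℤ} (h1 : -1 ≤ n) (h2 : n < m) :
    0 ≤ (U ℝ n).eval (cos (π / m)) := by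
  have hsin := sin_pi_div_pos hm
  have hm' : (0 : ℝ) < m := by positivity
  have key : 0 ≤ (U ℝ n).eval (cos (π / m)) * sin (π / m) := by
    rw [U_real_cos]
    apply sin_nonneg_of_nonneg_of_le_pi
    · have : (0 : ℝ) ≤ n + 1 := by exact_mod_cast (by omega : (0 : ℤ) ≤ n + 1)
      positivity
    · have : ((n : ℝ) + 1) ≤ m := by exact_mod_cast (by omega : n + 1 ≤ (m : ℤ))
      calc ((n : ℝ) + 1) * (π / m) ≤ m * (π / m) := by gcongr
        _ = π := by field_simp
  exact nonneg_of_mul_nonneg_left key hsin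

theorem U_eval_cos_pi_div_two_mul {m : ℕ} (hm : 2 ≤ m) :
    (U ℝ (2 * m)).eval (cos (π / m)) = 1 ∧ (U ℝ (2 * m - 1)).eval (cos (π / m)) = 0 := by
  have hsin := (sin_pi_div_pos hm).ne'
  have hm' : (m : ℝ) ≠ 0 := by positivity
  constructor
  · apply mul_right_cancel₀ hsin
    rw [U_real_cos, one_mul]
    push_cast
    rw [show (2 * (m : ℝ) + 1) * (π / m) = π / m + 2 * π by field_simp; ring, sin_add_two_pi]
  · apply mul_right_cancel₀ hsin
    rw [U_real_cos, zero_mul]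
    push_cast
    rw [show (2 * (m : ℝ) - 1 + 1) * (π / m) = 2 * π by field_simp; ring, sin_two_pi]

end Polynomial.Chebyshev

namespace CoxeterMatrix

variable {B : Type*} (M : CoxeterMatrix B)

theorem coxB_self (i : B) : coxB M i i = 1 := by
  simp [coxB, cos_pi]

theorem coxB_comm (i j : B) : coxB M i j = coxB M j i := by
  simp only [coxB, M.symmetric i j]

theorem neg_coxB_eq_cos {s t : B} (h : M s t ≠ 0) : -coxB M s t = cos (π / M s t) := by
  simp [coxB, h]

theorem U_eval_neg_coxB_nonneg {s t : B} (hst : s ≠ t) {n : ℤ} (h1 : -1 ≤ n)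
    (h2 : M s t = 0 ∨ n < M s t) : 0 ≤ (U ℝ n).eval (-coxB M s t) := by
  by_cases h : M s t = 0
  · simp only [coxB, h, if_true, neg_neg, U_eval_one]
    exact_mod_cast (by omega : (0 : ℤ) ≤ n + 1)
  have hm : 2 ≤ M s t := by have := M.off_diagonal s t hst; omega
  rw [neg_coxB_eq_cos M h]
  exact U_eval_cos_pi_div_nonneg hm h1 (h2.resolve_left h)

variable [Fintype B] [DecidableEq B]

noncomputable def form : LinearMap.BilinForm ℝ (B → ℝ) :=
  Matrix.toBilin' (Matrix.of (coxB M))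

theorem form_apply_single (v : B → ℝ) (i : B) :
    M.form v (Pi.single i 1) = ∑ j, v j * coxB M j i := by
  simp [form, Matrix.toBilin'_apply', dotProduct]

theorem form_single_single (i j : B) :
    M.form (Pi.single i 1) (Pi.single j 1) = coxB M i j := by
  simp [form_apply_single, Pi.single_apply]

theorem form_comm (u v : B → ℝ) : M.form u v = M.form v u := by
  simp only [form, Matrix.toBilin'_apply]
  rw [Finset.sum_comm]
  refine Finset.sum_congr rfl fun i _ => Finset.sum_congr rfl fun j _ => ?_
  rw [Matrix.of_apply, Matrix.of_apply, M.coxB_comm]; ring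

noncomputable def simpleReflection (i : B) : (B → ℝ) ≃ₗ[ℝ] (B → ℝ) :=
  Module.reflection (x := Pi.single i 1) (f := 2 • M.form.flip (Pi.single i 1))
    (by simp [form_single_single, coxB_self])

theorem simpleReflection_apply (i : B) (v : B → ℝ) :
    M.simpleReflection i v = v - (2 * M.form v (Pi.single i 1)) • Pi.single i 1 := by
  simp [simpleReflection, Module.reflection_apply]

theorem simpleReflection_single (i j : B) :
    M.simpleReflection i (Pi.single j 1) =
      Pi.single j 1 + (2 * -coxB M j i) • Pi.single i 1 := by
  rw [simpleReflection_apply, form_single_single]; module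

theorem simpleReflection_mul_self (i : B) : M.simpleReflection i * M.simpleReflection i = 1 :=
  mul_eq_one_iff_eq_inv.mpr (Module.reflection_inv _).symm

theorem simpleReflection_inv (i : B) : (M.simpleReflection i)⁻¹ = M.simpleReflection i :=
  Module.reflection_inv _

theorem simpleReflection_apply_of_ne {i j : B} (h : j ≠ i) (v : B → ℝ) :
    M.simpleReflection i v j = v j := by
  simp [simpleReflection_apply, h]

theorem simpleReflection_apply_of_form_eq_zero {i : B} {v : B → ℝ}
    (h : M.form v (Pi.single i 1) = 0) : M.simpleReflection i v = v := by
  simp [simpleReflection_apply, h]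

theorem form_simpleReflection (i : B) (u v : B → ℝ) :
    M.form (M.simpleReflection i u) (M.simpleReflection i v) = M.form u v := by
  simp only [simpleReflection_apply, map_sub, map_smul, LinearMap.sub_apply,
    LinearMap.smul_apply, form_single_single, coxB_self, smul_eq_mul]
  rw [M.form_comm (Pi.single i 1) v]
  ring

theorem coxSigmaGen_eq (i : B) : coxSigmaGen M i = M.simpleReflection i := by
  ext v b
  rw [simpleReflection_apply, form_apply_single]
  by_cases hb : b = i <;> simp [coxSigmaGen, hb]

theorem coxSigma_eq (w : List B) : coxSigma M w = ⇑(w.map M.simpleReflection).prod := by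
  induction w with
  | nil => rfl
  | cons a w ih =>
    ext v : 1
    rw [List.map_cons, List.prod_cons, LinearEquiv.mul_apply, ← ih, ← coxSigmaGen_eq]
    rfl

theorem simpleReflection_mul_pow_apply_single (s t : B) (j : ℕ) :
    ((M.simpleReflection s * M.simpleReflection t) ^ j) (Pi.single s 1) =
      (U ℝ (2 * j)).eval (-coxB M s t) • Pi.single s 1 +
        (U ℝ (2 * j - 1)).eval (-coxB M s t) • Pi.single t 1 := by
  induction j with
  | zero => simp
  | succ j ih =>
    rw [pow_succ', LinearEquiv.mul_apply, ih, LinearEquiv.mul_apply]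
    simp only [map_add, map_smul, simpleReflection_single, coxB_self, M.coxB_comm t s]
    rw [Nat.cast_succ, mul_add_one, show 2 * (j : ℤ) + 2 - 1 = 2 * j + 1 by ring,
      show 2 * (j : ℤ) + 2 = 2 * j + 1 + 1 by ring, U_eval_add_one _ (2 * j + 1),
      add_sub_cancel_right, U_eval_add_one]
    module

theorem simpleReflection_mul_pow_apply_of_form_eq_zero {s t : B} {w : B → ℝ}
    (hs : M.form w (Pi.single s 1) = 0) (ht : M.form w (Pi.single t 1) = 0) (n : ℕ) :
    ((M.simpleReflection s * M.simpleReflection t) ^ n) w = w := by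
  induction n with
  | zero => rfl
  | succ n ih =>
    rw [pow_succ', LinearEquiv.mul_apply, ih, LinearEquiv.mul_apply,
      simpleReflection_apply_of_form_eq_zero M ht, simpleReflection_apply_of_form_eq_zero M hs]

theorem simpleReflection_mul_pow_apply_single_eq_self {s t : B} (hst : s ≠ t) (h : M s t ≠ 0) :
    ((M.simpleReflection s * M.simpleReflection t) ^ M s t) (Pi.single s 1) = Pi.single s 1 := by
  have hm : 2 ≤ M s t := by have := M.off_diagonal s t hst; omega
  obtain ⟨h1, h0⟩ := U_eval_cos_pi_div_two_mul hm
  rw [simpleReflection_mul_pow_apply_single, neg_coxB_eq_cos M h, h1, h0]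
  simp

theorem exists_eq_add_smul_single_of_form_eq_zero {s t : B} (h : coxB M s t ^ 2 ≠ 1)
    (v : B → ℝ) : ∃ w : B → ℝ, ∃ p q : ℝ, v = w + p • Pi.single s 1 + q • Pi.single t 1 ∧
      M.form w (Pi.single s 1) = 0 ∧ M.form w (Pi.single t 1) = 0 := by
  set b := coxB M s t
  have hb : 1 - b ^ 2 ≠ 0 := sub_ne_zero.mpr (Ne.symm h)
  obtain ⟨p, hp⟩ : ∃ p, p * (1 - b ^ 2) =
      M.form v (Pi.single s 1) - b * M.form v (Pi.single t 1) := ⟨_, div_mul_cancel₀ _ hb⟩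
  obtain ⟨q, hq⟩ : ∃ q, q * (1 - b ^ 2) =
      M.form v (Pi.single t 1) - b * M.form v (Pi.single s 1) := ⟨_, div_mul_cancel₀ _ hb⟩
  refine ⟨v - p • Pi.single s 1 - q • Pi.single t 1, p, q, by abel, ?_, ?_⟩ <;>
    simp only [map_sub, map_smul, LinearMap.sub_apply, LinearMap.smul_apply, form_single_single,
      coxB_self, M.coxB_comm t s, smul_eq_mul] <;>
    refine mul_right_cancel₀ hb ?_
  · linear_combination -hp - b * hq
  · linear_combination -hq - b * hp

theorem simpleReflection_mul_pow_eq_one {s t : B} (hst : s ≠ t) (h : M s t ≠ 0) :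
    (M.simpleReflection s * M.simpleReflection t) ^ M s t = 1 := by
  have hs := M.simpleReflection_mul_pow_apply_single_eq_self hst h
  have ht : ((M.simpleReflection s * M.simpleReflection t) ^ M s t) (Pi.single t 1) =
      Pi.single t 1 := by
    have hinv : (M.simpleReflection s * M.simpleReflection t) ^ M s t =
        ((M.simpleReflection t * M.simpleReflection s) ^ M t s)⁻¹ := by
      rw [← inv_pow, mul_inv_rev, simpleReflection_inv, simpleReflection_inv, M.symmetric]
    rw [hinv, LinearEquiv.coe_inv, LinearEquiv.symm_apply_eq,
      M.simpleReflection_mul_pow_apply_single_eq_self hst.symm (M.symmetric s t ▸ h)]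
  have hb : coxB M s t ^ 2 ≠ 1 := by
    have hm : 2 ≤ M s t := by have := M.off_diagonal s t hst; omega
    have hsin := sin_pi_div_pos hm
    rw [← neg_sq, neg_coxB_eq_cos M h]
    nlinarith [sin_sq_add_cos_sq (π / M s t)]
  refine LinearEquiv.ext fun v => ?_
  obtain ⟨w, p, q, rfl, hws, hwt⟩ := M.exists_eq_add_smul_single_of_form_eq_zero hb v
  rw [map_add, map_add, map_smul, map_smul, hs, ht,
    simpleReflection_mul_pow_apply_of_form_eq_zero M hws hwt]
  rfl

theorem isLiftable_simpleReflection : M.IsLiftable M.simpleReflection := by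
  intro s t
  by_cases hst : s = t
  · subst hst
    rw [M.diagonal, pow_one, simpleReflection_mul_self]
  by_cases h : M s t = 0
  · rw [h, pow_zero]
  exact M.simpleReflection_mul_pow_eq_one hst h

end CoxeterMatrix

namespace CoxeterSystem

variable {B W : Type*} [Group W] {M : CoxeterMatrix B} (cs : CoxeterSystem M W)

theorem not_isRightDescent_of_length_mul_wordProd_cons {v : W} {i : B} {ω : List B}
    (h : cs.length (v * cs.wordProd (i :: ω)) = cs.length v + (ω.length + 1)) :
    ¬ cs.IsRightDescent v i := by
  intro hd
  rw [wordProd_cons, ← mul_assoc] at h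
  have := cs.length_mul_le (v * cs.simple i) (cs.wordProd ω)
  have := cs.length_wordProd_le ω
  rw [isRightDescent_iff] at hd
  omega

theorem isRightDescent_of_length_mul_wordProd_concat {v : W} {i : B} {ω : List B}
    (h : cs.length (v * cs.wordProd (ω.concat i)) = cs.length v + (ω.length + 1)) :
    cs.IsRightDescent (v * cs.wordProd (ω.concat i)) i := by
  rw [IsRightDescent, h, wordProd_concat, ← mul_assoc, simple_mul_simple_cancel_right]
  have := cs.length_mul_le v (cs.wordProd ω)
  have := cs.length_wordProd_le ω
  omega

theorem isReduced_of_length_mul_wordProd {v : W} {ω : List B}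
    (h : cs.length (v * cs.wordProd ω) = cs.length v + ω.length) : cs.IsReduced ω := by
  have := cs.length_mul_le v (cs.wordProd ω)
  have := cs.length_wordProd_le ω
  exact le_antisymm this (by omega)

theorem isReduced_iff_forall_length_le (ω : List B) :
    cs.IsReduced ω ↔ ∀ x, cs.wordProd x = cs.wordProd ω → ω.length ≤ x.length := by
  constructor
  · intro h x hx
    rw [← h.eq, ← hx]
    exact cs.length_wordProd_le x
  · intro h
    obtain ⟨x, hx, hxω⟩ := cs.exists_isReduced (cs.wordProd ω)
    exact le_antisymm (cs.length_wordProd_le ω) (hxω ▸ hx.eq ▸ h x hxω.symm)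

theorem alternatingWord_succ_eq_cons_of_isRightDescent {v : W} {s t x : B} {k : ℕ}
    (hx : x = s ∨ x = t) (hk : 0 < k)
    (hlen : cs.length (v * cs.wordProd (alternatingWord s t k)) = cs.length v + k)
    (hd : cs.IsRightDescent v x) :
    alternatingWord s t (k + 1) = x :: alternatingWord s t k := by
  obtain ⟨k, rfl⟩ : ∃ k', k = k' + 1 := ⟨k - 1, by omega⟩
  have hfirst : x ≠ if Even k then t else s := by
    intro hxe
    rw [hxe] at hd
    refine cs.not_isRightDescent_of_length_mul_wordProd_cons (ω := alternatingWord s t k) ?_ hd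
    rw [← alternatingWord_succ', hlen, length_alternatingWord]
  rw [alternatingWord_succ' s t (k + 1)]
  congr 1
  by_cases he : Even k
  · rw [if_pos he] at hfirst
    rw [if_neg (by simpa [Nat.even_add_one] using he)]
    tauto
  · rw [if_neg he] at hfirst
    rw [if_pos (by simpa [Nat.even_add_one] using he)]
    tauto

theorem lt_of_length_mul_alternatingWord {v : W} {s t : B} {k : ℕ}
    (hlen : cs.length (v * cs.wordProd (alternatingWord s t k)) = cs.length v + k)
    (hs : ¬ cs.IsRightDescent (v * cs.wordProd (alternatingWord s t k)) s) :
    M s t = 0 ∨ k < M s t := by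
  by_contra! hkm
  obtain ⟨hm0, hmk⟩ := hkm
  rcases hmk.lt_or_eq with hlt | rfl
  · exact cs.not_isReduced_alternatingWord s t hm0 hlt
      (cs.isReduced_of_length_mul_wordProd (by rw [hlen, length_alternatingWord]))
  · obtain ⟨k, hk⟩ : ∃ k, M s t = k + 1 := ⟨M s t - 1, by omega⟩
    have hbraid : cs.wordProd (alternatingWord s t (M s t)) =
        cs.wordProd ((alternatingWord s t k).concat s) := by
      have := cs.wordProd_braidWord_eq s t
      rw [braidWord, braidWord, M.symmetric t s, hk, alternatingWord_succ t s] at this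
      rwa [hk]
    rw [hbraid] at hlen hs
    exact hs (cs.isRightDescent_of_length_mul_wordProd_concat
      (by rw [hlen, hk, length_alternatingWord]))

/-- Humphreys, *Reflection groups and Coxeter groups*, §5.5: take `k` as large as possible. -/
theorem exists_mul_alternatingWord {g : W} {s t : B} (hs : ¬ cs.IsRightDescent g s)
    (ht : cs.IsRightDescent g t) :
    ∃ v k, g = v * cs.wordProd (alternatingWord s t k) ∧ cs.length g = cs.length v + k ∧
      0 < k ∧ (M s t = 0 ∨ k < M s t) ∧ ¬ cs.IsRightDescent v s ∧ ¬ cs.IsRightDescent v t := by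
  classical
  let Q k := ∃ v, g = v * cs.wordProd (alternatingWord s t k) ∧ cs.length g = cs.length v + k
  have hQ1 : Q 1 := ⟨g * cs.simple t, by simp [alternatingWord],
    ((cs.isRightDescent_iff).mp ht).symm⟩
  have hQle : ∀ {k}, Q k → k ≤ cs.length g := by rintro k ⟨v, -, h⟩; omega
  have hg1 : 1 ≤ cs.length g := hQle hQ1
  set k := Nat.findGreatest Q (cs.length g)
  obtain ⟨v, hg, hlen⟩ : Q k := Nat.findGreatest_spec hg1 hQ1
  have hk : 0 < k := Nat.le_findGreatest hg1 hQ1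
  have hmax : ¬ Q (k + 1) := fun h => Nat.findGreatest_is_greatest (lt_add_one k) (hQle h) h
  have hasc (x : B) (hx : x = s ∨ x = t) : ¬ cs.IsRightDescent v x := by
    intro hd
    refine hmax ⟨v * cs.simple x, ?_, ?_⟩
    · rw [cs.alternatingWord_succ_eq_cons_of_isRightDescent hx hk (hg ▸ hlen) hd, wordProd_cons,
        mul_assoc, simple_mul_simple_cancel_left, hg]
    · rw [cs.isRightDescent_iff] at hd; omega
  exact ⟨v, k, hg, hlen, hk, cs.lt_of_length_mul_alternatingWord (hg ▸ hlen) (hg ▸ hs),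
    hasc s (.inl rfl), hasc t (.inr rfl)⟩

variable [Fintype B] [DecidableEq B]

noncomputable def geometricRep : W →* (B → ℝ) ≃ₗ[ℝ] (B → ℝ) :=
  cs.lift ⟨M.simpleReflection, M.isLiftable_simpleReflection⟩

theorem geometricRep_simple (i : B) : cs.geometricRep (cs.simple i) = M.simpleReflection i :=
  cs.lift_apply_simple _ i

theorem geometricRep_wordProd (ω : List B) :
    ⇑(cs.geometricRep (cs.wordProd ω)) = coxSigma M ω := by
  rw [wordProd, map_list_prod, List.map_map, M.coxSigma_eq]
  congr 3
  exact funext cs.geometricRep_simple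

theorem geometricRep_alternatingWord_apply_single {s t : B} (hst : s ≠ t) {k : ℕ}
    (hk : M s t = 0 ∨ k < M s t) :
    ∃ a b : ℝ, 0 ≤ a ∧ 0 ≤ b ∧ cs.geometricRep (cs.wordProd (alternatingWord s t k))
      (Pi.single s 1) = a • Pi.single s 1 + b • Pi.single t 1 := by
  have hU {n : ℤ} (h1 : -1 ≤ n) (h2 : n ≤ k) := M.U_eval_neg_coxB_nonneg hst h1 (by omega)
  rw [prod_alternatingWord_eq_mul_pow, map_mul, map_pow, map_mul, geometricRep_simple,
    geometricRep_simple]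
  rcases Nat.even_or_odd' k with ⟨j, rfl | rfl⟩
  · rw [if_pos (even_two_mul j), map_one, one_mul, Nat.mul_div_cancel_left j two_pos,
      M.simpleReflection_mul_pow_apply_single]
    exact ⟨_, _, hU (n := 2 * j) (by omega) (by push_cast; omega),
      hU (n := 2 * j - 1) (by omega) (by push_cast; omega), rfl⟩
  · rw [if_neg (Nat.not_even_iff_odd.mpr (odd_two_mul_add_one j)), LinearEquiv.mul_apply,
      show (2 * j + 1) / 2 = j by omega, M.simpleReflection_mul_pow_apply_single,
      geometricRep_simple]
    refine ⟨_, _, hU (n := 2 * j) (by omega) (by push_cast; omega), hU (n := 2 * j + 1) (by omega)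
      (by push_cast; omega), ?_⟩
    simp only [map_add, map_smul, M.simpleReflection_single, M.coxB_self]
    rw [U_eval_add_one]
    module

/-- Humphreys, *Reflection groups and Coxeter groups*, Theorem 5.4. -/
theorem geometricRep_apply_single_nonneg {g : W} {i : B} (h : ¬ cs.IsRightDescent g i) :
    0 ≤ cs.geometricRep g (Pi.single i 1) := by
  induction hn : cs.length g using Nat.strong_induction_on generalizing g i with
  | _ n ih =>
  by_cases hg : g = 1
  · simp [hg, Pi.single_nonneg]
  obtain ⟨t, ht⟩ := cs.exists_rightDescent_of_ne_one hg
  have hit : i ≠ t := by rintro rfl; exact h ht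
  obtain ⟨v, k, rfl, hlen, hk, hkm, hvi, hvt⟩ := cs.exists_mul_alternatingWord h ht
  obtain ⟨a, b, ha, hb, hab⟩ := cs.geometricRep_alternatingWord_apply_single hit hkm
  rw [map_mul, LinearEquiv.mul_apply, hab, map_add, map_smul, map_smul]
  exact add_nonneg (smul_nonneg ha (ih _ (by omega) hvi rfl))
    (smul_nonneg hb (ih _ (by omega) hvt rfl))

theorem form_geometricRep (g : W) (u v : B → ℝ) :
    M.form (cs.geometricRep g u) (cs.geometricRep g v) = M.form u v := by
  induction g using cs.simple_induction_left with
  | one => simp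
  | mul_simple_left g i ih =>
    rw [map_mul, LinearEquiv.mul_apply, LinearEquiv.mul_apply, geometricRep_simple,
      M.form_simpleReflection, ih]

theorem form_geometricRep_left (g : W) (u v : B → ℝ) :
    M.form (cs.geometricRep g u) v = M.form u (cs.geometricRep g⁻¹ v) := by
  rw [← cs.form_geometricRep g⁻¹, ← LinearEquiv.mul_apply, ← map_mul, inv_mul_cancel, map_one]
  rfl

end CoxeterSystem

theorem Pi.single_some_eq_elim' {B β : Type*} [DecidableEq B] [Zero β] (a : B) (x : β) :
    Pi.single (some a) x = Option.elim' 0 (Pi.single a x) := by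
  funext o
  cases o <;> simp [Pi.single_apply]

namespace CoxeterMatrix

variable {B : Type*} (M : CoxeterMatrix B)

def adjoinFree : CoxeterMatrix (Option B) where
  M := Matrix.of (extMatrix M)
  isSymm := Matrix.IsSymm.ext fun
    | some i, some j => M.symmetric j i
    | none, none | some _, none | none, some _ => rfl
  diagonal
    | some i => M.diagonal i
    | none => rfl
  off_diagonal
    | some i, some j, h => M.off_diagonal i j (by simpa using h)
    | none, none, h => absurd rfl h
    | some _, none, _ | none, some _, _ => zero_ne_one

theorem coxB_adjoinFree_some_some (i j : B) :
    coxB M.adjoinFree (some i) (some j) = coxB M i j := rfl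

theorem coxB_adjoinFree_some_none (i : B) : coxB M.adjoinFree (some i) none = -1 := by
  simp [coxB, adjoinFree, extMatrix]

variable [Fintype B] [DecidableEq B]

theorem adjoinFree_simpleReflection_elim' (i : B) (v : B → ℝ) :
    M.adjoinFree.simpleReflection (some i) (Option.elim' 0 v) =
      Option.elim' 0 (M.simpleReflection i v) := by
  funext o
  cases o with
  | none => simp [simpleReflection_apply]
  | some b =>
    simp [simpleReflection_apply, form_apply_single, Fintype.sum_option,
      coxB_adjoinFree_some_some, Pi.single_apply]

theorem form_adjoinFree_elim'_single_none (v : B → ℝ) :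
    M.adjoinFree.form (Option.elim' 0 v) (Pi.single none 1) = -∑ b, v b := by
  simp [form_apply_single, Fintype.sum_option, coxB_adjoinFree_some_none]

end CoxeterMatrix

namespace CoxeterSystem

variable {B W : Type*} [Group W] {M : CoxeterMatrix B} (cs : CoxeterSystem M W)

noncomputable def toAdjoinFree : W →* M.adjoinFree.Group :=
  cs.lift ⟨fun i => M.adjoinFree.toCoxeterSystem.simple (some i),
    fun i i' => M.adjoinFree.toCoxeterSystem.simple_mul_simple_pow (some i) (some i')⟩

theorem toAdjoinFree_wordProd (ω : List B) :
    cs.toAdjoinFree (cs.wordProd ω) = M.adjoinFree.toCoxeterSystem.wordProd (ω.map some) := by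
  rw [wordProd, wordProd, map_list_prod, List.map_map, List.map_map]
  congr 2
  exact funext (cs.lift_apply_simple _)

theorem toAdjoinFree_simple (i : B) :
    cs.toAdjoinFree (cs.simple i) = M.adjoinFree.toCoxeterSystem.simple (some i) :=
  cs.lift_apply_simple _ i

variable [Fintype B] [DecidableEq B]

noncomputable def adjoinFreeRep : W →* (Option B → ℝ) ≃ₗ[ℝ] (Option B → ℝ) :=
  M.adjoinFree.toCoxeterSystem.geometricRep.comp cs.toAdjoinFree

theorem adjoinFreeRep_simple (i : B) :
    cs.adjoinFreeRep (cs.simple i) = M.adjoinFree.simpleReflection (some i) := by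
  rw [adjoinFreeRep, MonoidHom.comp_apply, toAdjoinFree_simple, geometricRep_simple]

theorem coe_adjoinFreeRep_wordProd (ω : List B) :
    ⇑(cs.adjoinFreeRep (cs.wordProd ω)) = coxSigma (extMatrix M) (ω.map some) := by
  rw [adjoinFreeRep, MonoidHom.comp_apply, toAdjoinFree_wordProd, geometricRep_wordProd]
  rfl

theorem adjoinFreeRep_apply_elim' (g : W) (v : B → ℝ) :
    cs.adjoinFreeRep g (Option.elim' 0 v) = Option.elim' 0 (cs.geometricRep g v) := by
  induction g using cs.simple_induction_left generalizing v with
  | one => simp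
  | mul_simple_left g i ih =>
    rw [map_mul, map_mul, LinearEquiv.mul_apply, LinearEquiv.mul_apply, ih, adjoinFreeRep_simple,
      geometricRep_simple, M.adjoinFree_simpleReflection_elim']

theorem adjoinFreeRep_apply_single_none_none (g : W) :
    cs.adjoinFreeRep g (Pi.single none 1) none = 1 := by
  induction g using cs.simple_induction_left with
  | one => simp
  | mul_simple_left g i ih =>
    rw [map_mul, LinearEquiv.mul_apply, adjoinFreeRep_simple,
      CoxeterMatrix.simpleReflection_apply_of_ne _ (Option.some_ne_none i).symm, ih]

theorem adjoinFreeRep_wordProd_apply_some_lt {a : B} {ω : List B} (h : cs.IsReduced (a :: ω)) :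
    cs.adjoinFreeRep (cs.wordProd ω) (Pi.single none 1) (some a) <
      cs.adjoinFreeRep (cs.wordProd (a :: ω)) (Pi.single none 1) (some a) := by
  set g := cs.wordProd ω
  set ν := cs.geometricRep g⁻¹ (Pi.single a 1)
  have hν : 0 ≤ ν := by
    apply cs.geometricRep_apply_single_nonneg
    rw [isRightDescent_inv_iff, IsLeftDescent, ← wordProd_cons, h.eq]
    have : cs.length g ≤ ω.length := cs.length_wordProd_le ω
    simp only [List.length_cons]
    omega
  have hν0 : ν ≠ 0 := by simp [ν]
  obtain ⟨c, hc⟩ := Function.ne_iff.mp hν0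
  have hsum : 0 < ∑ b, ν b :=
    Finset.sum_pos' (fun b _ => hν b) ⟨c, Finset.mem_univ c, lt_of_le_of_ne (hν c) hc.symm⟩
  have hform : M.adjoinFree.form (cs.adjoinFreeRep g (Pi.single none 1)) (Pi.single (some a) 1) =
      -∑ b, ν b := by
    rw [adjoinFreeRep, MonoidHom.comp_apply, CoxeterSystem.form_geometricRep_left, ← map_inv,
      CoxeterMatrix.form_comm, ← MonoidHom.comp_apply, ← adjoinFreeRep, Pi.single_some_eq_elim',
      adjoinFreeRep_apply_elim', M.form_adjoinFree_elim'_single_none]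
  rw [wordProd_cons, map_mul, LinearEquiv.mul_apply, adjoinFreeRep_simple,
    CoxeterMatrix.simpleReflection_apply, hform]
  simp only [Pi.sub_apply, Pi.smul_apply, Pi.single_eq_same, smul_eq_mul]
  linarith

theorem adjoinFreeRep_wordProd_apply_some {ω : List B} (h : cs.IsReduced ω) (b : B) :
    (b ∈ ω → 0 < cs.adjoinFreeRep (cs.wordProd ω) (Pi.single none 1) (some b)) ∧
      (b ∉ ω → cs.adjoinFreeRep (cs.wordProd ω) (Pi.single none 1) (some b) = 0) := by
  induction ω with
  | nil => simp
  | cons a ω ih =>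
    obtain ⟨ihpos, ihzero⟩ := ih (h.drop 1)
    by_cases hba : b = a
    · subst hba
      have hnonneg : 0 ≤ cs.adjoinFreeRep (cs.wordProd ω) (Pi.single none 1) (some b) := by
        by_cases hb : b ∈ ω
        exacts [(ihpos hb).le, (ihzero hb).ge]
      exact ⟨fun _ => hnonneg.trans_lt (cs.adjoinFreeRep_wordProd_apply_some_lt h),
        fun hb => absurd List.mem_cons_self hb⟩
    · rw [wordProd_cons, map_mul, LinearEquiv.mul_apply, adjoinFreeRep_simple,
        CoxeterMatrix.simpleReflection_apply_of_ne _ (by simpa using hba), List.mem_cons]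
      simpa [hba] using ⟨ihpos, ihzero⟩

theorem adjoinFreeRep_apply_single_none_nonneg (g : W) :
    0 ≤ cs.adjoinFreeRep g (Pi.single none 1) := by
  obtain ⟨ω, hω, rfl⟩ := cs.exists_isReduced g
  rintro (_ | b)
  · exact (cs.adjoinFreeRep_apply_single_none_none _).symm ▸ zero_le_one
  · obtain ⟨hpos, hzero⟩ := cs.adjoinFreeRep_wordProd_apply_some hω b
    by_cases hb : b ∈ ω
    exacts [(hpos hb).le, (hzero hb).ge]

end CoxeterSystem

section

variable {S : Type*} (M : S → S → ℕ) (hsym : ∀ i j, M i j = M j i)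
  (hdiag : ∀ i j, M i j = 1 ↔ i = j)

def coxMatrix : CoxeterMatrix S where
  M := Matrix.of M
  isSymm := Matrix.IsSymm.ext fun i j => hsym j i
  diagonal i := (hdiag i i).mpr rfl
  off_diagonal i j h := mt (hdiag i j).mp h

theorem relationsSet_coxMatrix : (coxMatrix M hsym hdiag).relationsSet = coxRels M := by
  ext r
  simp [CoxeterMatrix.relationsSet, coxRels, CoxeterMatrix.relation, coxMatrix, eq_comm]

noncomputable def coxSystem : CoxeterSystem (coxMatrix M hsym hdiag) (PresentedGroup (coxRels M)) :=
  ⟨QuotientGroup.quotientMulEquivOfEq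
    (congrArg Subgroup.normalClosure (relationsSet_coxMatrix M hsym hdiag).symm)⟩

theorem coxSystem_wordProd (ω : List S) : (coxSystem M hsym hdiag).wordProd ω = coxEval M ω :=
  rfl

end

theorem unitVec_eq_single {S : Type*} [DecidableEq S] (a : S) : unitVec a = Pi.single a 1 := by
  funext b
  simp [unitVec, Pi.single_apply]

/-- Let `G' = G * (ℤ/2ℤ)` with new generator `x`, and for `w ∈ G` write
`σ_w(x) = Σ_b λ_b b` in the geometric representation of `G'`. Then all coefficients
`λ_b` are nonnegative, and for every generator `b` of `G`: `λ_b ≠ 0` iff `b` occurs in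
some geodesic word for `w`; moreover `λ_b > 0` whenever `b` occurs in a geodesic for `w`. -/
theorem coxeter_sigma_x_alphabet {S : Type*} [Fintype S] [DecidableEq S]
    (M : S → S → ℕ)
    (hsym : ∀ i j, M i j = M j i)
    (hdiag : ∀ i j, M i j = 1 ↔ i = j)
    (w : List S) :
    (∀ c : Option S, 0 ≤ coxSigma (extMatrix M) (w.map some) (unitVec none) c) ∧
    ∀ b : S,
      (coxSigma (extMatrix M) (w.map some) (unitVec none) (some b) ≠ 0 ↔
        ∃ u : List S, (∀ x : List S, coxEval M x = coxEval M u → u.length ≤ x.length) ∧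
          coxEval M u = coxEval M w ∧ b ∈ u) ∧
      (∀ u : List S, (∀ x : List S, coxEval M x = coxEval M u → u.length ≤ x.length) →
        coxEval M u = coxEval M w → b ∈ u →
          0 < coxSigma (extMatrix M) (w.map some) (unitVec none) (some b)) := by
  set cs := coxSystem M hsym hdiag
  have hσ (u : List S) : coxSigma (extMatrix M) (u.map some) (unitVec none) =
      cs.adjoinFreeRep (coxEval M u) (Pi.single none 1) := by
    rw [unitVec_eq_single, ← coxSystem_wordProd M hsym hdiag, cs.coe_adjoinFreeRep_wordProd]
    rfl
  have hred (u : List S) :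
      (∀ x, coxEval M x = coxEval M u → u.length ≤ x.length) ↔ cs.IsReduced u := by
    simp only [cs.isReduced_iff_forall_length_le, cs, coxSystem_wordProd]
  obtain ⟨u₀, hu₀, hw⟩ := cs.exists_isReduced (coxEval M w)
  rw [coxSystem_wordProd] at hw
  simp only [hσ, hred, hw]
  refine ⟨cs.adjoinFreeRep_apply_single_none_nonneg _, fun b => ⟨⟨fun hb => ?_, ?_⟩, ?_⟩⟩
  · exact ⟨u₀, hu₀, rfl,
      by_contra fun hb' => hb ((cs.adjoinFreeRep_wordProd_apply_some hu₀ b).2 hb')⟩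
  · rintro ⟨u, hu, hu_eq, hbu⟩
    rw [← hu_eq]
    exact ((cs.adjoinFreeRep_wordProd_apply_some hu b).1 hbu).ne'
  · intro u hu hu_eq hbu
    rw [← hu_eq]
    exact (cs.adjoinFreeRep_wordProd_apply_some hu b).1 hbu
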